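/- arXiv:0712.2682 — 2 statements merged into one kernel-verified Lean document; each statement's English description precedes it below -/
import Mathlib

section
/- Let Y be an n×m matrix with entries in {0,1}. Define V(Y) = min(o, nm − o) where o is the number of ones; V_R(Y) = Σ_j min(o_j, n − o_j); V_C(Y) = Σ_i min(o_i, m − o_i). Then V(Y) ≤ ((1+√2)/2)·(V_R(Y) + V_C(Y)). -/
/-!
Complementing `Y` swaps `o` and `nm - o` and preserves both marginal costs, so assume `2o ≤ nm`.
Call a column heavy if more than half of its entries are ones, and let `H` (resp. `K`) be the set
of heavy columns (rows). Let `a₀, a₁` be the ones in light columns and the zeros in heavy columns,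
so `V_R = a₀ + a₁`, and similarly `V_C = b₀ + b₁`. Counting cells gives

  `o ≤ a₀ + b₀ + |H||K|`,  `|H| n = o - a₀ + a₁`,  `|K| m = o - b₀ + b₁`,

and `2o |H||K| ≤ nm |H||K| = (|H| n)(|K| m)` turns these into
`o² ≤ o s + (a₁ - a₀)(b₁ - b₀) ≤ o s + s²/4` with `s = V_R + V_C`.
The larger root of `x² = x s + s²/4` is `(1 + √2) s / 2`.
-/

open Finset

lemma le_one_add_sqrt_two_div_two_mul_of_sq_le {x s : ℝ} (hs : 0 ≤ s)
    (h : x ^ 2 ≤ x * s + s ^ 2 / 4) : x ≤ (1 + √2) / 2 * s := by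
  have h2 : √2 ^ 2 = 2 := Real.sq_sqrt zero_le_two
  by_contra! hx
  have hpos : 0 < (x - (1 + √2) / 2 * s) * (x - (1 - √2) / 2 * s) :=
    mul_pos (by linarith) (by nlinarith [Real.sqrt_nonneg 2])
  nlinarith

lemma le_one_add_sqrt_two_div_two_mul_of_cover {o a₀ a₁ b₀ b₁ h k n m : ℝ} (ho : 0 ≤ o)
    (ha₀ : 0 ≤ a₀) (ha₁ : 0 ≤ a₁) (hb₀ : 0 ≤ b₀) (hb₁ : 0 ≤ b₁) (hhk : 0 ≤ h * k)
    (hcover : o ≤ a₀ + b₀ + h * k) (hcol : h * n + a₀ = o + a₁) (hrow : k * m + b₀ = o + b₁)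
    (hhalf : 2 * o ≤ n * m) :
    o ≤ (1 + √2) / 2 * (a₀ + a₁ + (b₀ + b₁)) := by
  have hquad : 2 * o ^ 2 ≤ 2 * o * (a₀ + b₀) + (o + a₁ - a₀) * (o + b₁ - b₀) :=
    calc 2 * o ^ 2 ≤ 2 * o * (a₀ + b₀) + h * k * (2 * o) := by nlinarith
      _ ≤ 2 * o * (a₀ + b₀) + h * k * (n * m) := by gcongr
      _ = 2 * o * (a₀ + b₀) + (h * n) * (k * m) := by ring
      _ = 2 * o * (a₀ + b₀) + (o + a₁ - a₀) * (o + b₁ - b₀) := by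
        rw [eq_sub_of_add_eq hcol, eq_sub_of_add_eq hrow]
  apply le_one_add_sqrt_two_div_two_mul_of_sq_le (by positivity)
  -- `(a₁ - a₀)(b₁ - b₀) ≤ (a₀ + a₁)(b₀ + b₁) ≤ s² / 4`
  nlinarith [sq_nonneg (a₀ + a₁ - b₀ - b₁), mul_nonneg ha₁ hb₀, mul_nonneg ha₀ hb₁]

variable {α β : Type*}

def numOnes [Fintype α] [Fintype β] (Y : α → β → Bool) : ℕ := #{p : α × β | Y p.1 p.2}

def colOnes [Fintype α] (Y : α → β → Bool) (j : β) : ℕ := #{i | Y i j}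

def colCost [Fintype α] [Fintype β] (Y : α → β → Bool) : ℕ :=
  ∑ j, min (colOnes Y j) (Fintype.card α - colOnes Y j)

def rowCost [Fintype α] [Fintype β] (Y : α → β → Bool) : ℕ := colCost (flip Y)

def heavyCols [Fintype α] [Fintype β] (Y : α → β → Bool) : Finset β :=
  {j | Fintype.card α < 2 * colOnes Y j}

section

variable [Fintype α]

lemma colOnes_le_card (Y : α → β → Bool) (j : β) : colOnes Y j ≤ Fintype.card α :=
  card_le_univ _

lemma colOnes_eq_sum_ite (Y : α → β → Bool) (j : β) :
    colOnes Y j = ∑ i, if Y i j then 1 else 0 :=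
  card_filter _ _

lemma colOnes_not_add (Y : α → β → Bool) (j : β) :
    colOnes (fun i j => !Y i j) j + colOnes Y j = Fintype.card α := by
  rw [add_comm, colOnes, colOnes, ← card_univ]
  simpa using card_filter_add_card_filter_not (s := univ) (fun i => Y i j = true)

variable [Fintype β]

lemma sum_colOnes (Y : α → β → Bool) : ∑ j, colOnes Y j = numOnes Y := by
  simp only [colOnes_eq_sum_ite, numOnes, card_filter, Fintype.sum_prod_type]
  exact sum_comm

lemma numOnes_flip (Y : α → β → Bool) : numOnes (flip Y) = numOnes Y :=
  card_equiv (Equiv.prodComm β α) fun _ => by simp only [mem_filter, mem_univ, true_and]; rfl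

lemma numOnes_not_add (Y : α → β → Bool) :
    numOnes (fun i j => !Y i j) + numOnes Y = Fintype.card α * Fintype.card β := by
  rw [← sum_colOnes, ← sum_colOnes, ← sum_add_distrib]
  simp [colOnes_not_add, mul_comm]

lemma colCost_not (Y : α → β → Bool) : colCost (fun i j => !Y i j) = colCost Y := by
  refine sum_congr rfl fun j _ => ?_
  have := colOnes_not_add Y j
  omega

lemma rowCost_not (Y : α → β → Bool) : rowCost (fun i j => !Y i j) = rowCost Y :=
  colCost_not (flip Y)

lemma sum_colOnes_le [DecidableEq α] (Y : α → β → Bool) (H : Finset β) (K : Finset α) :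
    ∑ j ∈ H, colOnes Y j ≤ #H * #K + ∑ i ∈ Kᶜ, colOnes (flip Y) i := by
  simp only [colOnes_eq_sum_ite, flip]
  calc ∑ j ∈ H, ∑ i, (if Y i j then 1 else 0)
      = ∑ j ∈ H, ∑ i ∈ K, (if Y i j then 1 else 0) +
          ∑ j ∈ H, ∑ i ∈ Kᶜ, (if Y i j then 1 else 0) := by
        rw [← sum_add_distrib]
        exact sum_congr rfl fun j _ => (sum_add_sum_compl K _).symm
    _ ≤ ∑ j ∈ H, #K + ∑ j, ∑ i ∈ Kᶜ, (if Y i j then 1 else 0) := by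
        gcongr with j
        · exact (card_filter _ _).symm.trans_le (card_filter_le _ _)
        · exact subset_univ H
    _ = #H * #K + ∑ i ∈ Kᶜ, ∑ j, (if Y i j then 1 else 0) := by
        rw [sum_const, smul_eq_mul, sum_comm]

variable [DecidableEq β]

lemma card_mul_add_sum_compl_colOnes (Y : α → β → Bool) (H : Finset β) :
    #H * Fintype.card α + ∑ j ∈ Hᶜ, colOnes Y j =
      numOnes Y + ∑ j ∈ H, (Fintype.card α - colOnes Y j) := by
  have hH : ∑ j ∈ H, Fintype.card α =
      ∑ j ∈ H, colOnes Y j + ∑ j ∈ H, (Fintype.card α - colOnes Y j) := by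
    rw [← sum_add_distrib]
    exact sum_congr rfl fun j _ => (Nat.add_sub_of_le (colOnes_le_card Y j)).symm
  rw [← sum_colOnes, ← sum_add_sum_compl H]
  rw [sum_const, smul_eq_mul] at hH
  omega

lemma colCost_eq_sum_light_add_sum_heavy (Y : α → β → Bool) :
    colCost Y = ∑ j ∈ (heavyCols Y)ᶜ, colOnes Y j +
      ∑ j ∈ heavyCols Y, (Fintype.card α - colOnes Y j) := by
  rw [colCost, ← sum_add_sum_compl (heavyCols Y), add_comm]
  congr 1 <;> refine sum_congr rfl fun j hj => ?_ <;>
    simp only [heavyCols, mem_compl, mem_filter, mem_univ, true_and] at hj <;> omega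

end

theorem numOnes_le_of_two_mul_le [Fintype α] [Fintype β] (Y : α → β → Bool)
    (hhalf : 2 * numOnes Y ≤ Fintype.card α * Fintype.card β) :
    (numOnes Y : ℝ) ≤ (1 + √2) / 2 * (colCost Y + rowCost Y) := by
  classical
  rw [rowCost, colCost_eq_sum_light_add_sum_heavy, colCost_eq_sum_light_add_sum_heavy]
  set H := heavyCols Y
  set K := heavyCols (flip Y)
  have hcol := card_mul_add_sum_compl_colOnes Y H
  have hrow := card_mul_add_sum_compl_colOnes (flip Y) K
  rw [numOnes_flip] at hrow
  have hcover : numOnes Y ≤ ∑ j ∈ Hᶜ, colOnes Y j + ∑ i ∈ Kᶜ, colOnes (flip Y) i + #H * #K := by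
    have := sum_colOnes_le Y H K
    rw [← sum_colOnes, ← sum_add_sum_compl H]
    omega
  push_cast
  exact le_one_add_sqrt_two_div_two_mul_of_cover (h := #H) (k := #K) (n := Fintype.card α)
    (m := Fintype.card β) (by positivity) (by positivity) (by positivity) (by positivity)
    (by positivity) (by positivity) (by exact_mod_cast hcover) (by exact_mod_cast hcol)
    (by exact_mod_cast hrow) (by exact_mod_cast hhalf)

theorem min_numOnes_le [Fintype α] [Fintype β] (Y : α → β → Bool) :
    ((min (numOnes Y) (Fintype.card α * Fintype.card β - numOnes Y) : ℕ) : ℝ) ≤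
      (1 + √2) / 2 * (colCost Y + rowCost Y) := by
  have hnot := numOnes_not_add Y
  rcases le_total (2 * numOnes Y) (Fintype.card α * Fintype.card β) with hhalf | hhalf
  · exact (Nat.cast_le.2 (min_le_left _ _)).trans (numOnes_le_of_two_mul_le Y hhalf)
  · calc _ ≤ (numOnes (fun i j => !Y i j) : ℝ) := Nat.cast_le.2 (by omega)
      _ ≤ _ := by
        simpa only [colCost_not, rowCost_not] using
          numOnes_le_of_two_mul_le (fun i j => !Y i j) (by omega)

open Finset in
/-- For any 0-1 matrix, V(Y) ≤ ((1+√2)/2)(V_R(Y) + V_C(Y)) under L1 cost about medians. -/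
theorem l1_cost_le_ratio_row_col (n m : ℕ) (Y : Fin n → Fin m → Bool)
    (o : ℕ)
    (ho : o = (Finset.univ.filter (fun p : Fin n × Fin m => Y p.1 p.2 = true)).card) :
    ((min o (n * m - o) : ℕ) : ℝ) ≤ (1 + Real.sqrt 2) / 2 *
      (((∑ j : Fin m,
          min ((Finset.univ.filter (fun i : Fin n => Y i j = true)).card)
            (n - (Finset.univ.filter (fun i : Fin n => Y i j = true)).card) : ℕ) : ℝ) +
        ((∑ i : Fin n,
          min ((Finset.univ.filter (fun j : Fin m => Y i j = true)).card)
            (m - (Finset.univ.filter (fun j : Fin m => Y i j = true)).card) : ℕ) : ℝ)) := by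
  subst ho
  have h := min_numOnes_le Y
  simp only [numOnes, colCost, rowCost, colOnes, flip, Fintype.card_fin] at h
  exact h
end

section
/- Biclustering of 0-1 matrices with L1 cost admits a (1+√2)-approximation by independent one-way clusterings: if R minimizes L_R and C minimizes L_C under L1 cost, then L ≤ (1+√2)·L*. -/
/-!
Take an optimal row clustering ρ and column clustering γ and a block R × C of the biclustering
they induce; replacing X by its complement if needed, the block has no more ones than zeros, so
its cost is its number of ones. Split R into the rows P whose majority in C is zero and the rest Q,
and C likewise into A and B. The one-way costs of the block count the ones of P and of A and the
zeros of Q and of B, and since the quadrants P × A, Q × A, P × B, Q × B are rectangles,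
|P × A| · |Q × B| = |Q × A| · |P × B|; an AM-GM argument on these eight counts gives
2 V(R × C) ≤ (1 + √2) (∑ᵢ V({i} × C) + ∑ⱼ V(R × {j})). Summing over blocks,
2 L ≤ (1 + √2) (L_C + L_R), and each one-way optimum is at most L*, because splitting a
cluster into finer pieces never increases the cost about a median.
-/

open Finset in
/-- L1 cost (about a median) of the 0-1 submatrix of `X` induced by rows `R` and
columns `C`: the smaller of the number of ones and the number of zeros. -/
def V1 {N M : ℕ} (X : Fin N → Fin M → Bool)
    (R : Finset (Fin N)) (C : Finset (Fin M)) : ℕ :=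
  min ((R ×ˢ C).filter (fun p => X p.1 p.2 = true)).card
    (R.card * C.card - ((R ×ˢ C).filter (fun p => X p.1 p.2 = true)).card)

open Finset

lemma le_of_sub_le_sub_of_mul_le_mul {x y a b : ℝ} (ha : 0 ≤ a) (hb : 0 ≤ b)
    (hsub : x - a ≤ y - b) (hmul : x * y ≤ a * b) : x ≤ a := by
  by_contra! hax
  nlinarith [mul_le_mul_of_nonneg_left (show b ≤ y by linarith) ha]

/-- `t, u, v, w` count the ones and `t', u', v', w'` the zeros of the quadrants `P × A, Q × A, P × B,
Q × B` of a block; `hcard` says that the quadrants are rectangles. -/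
lemma quadrant_bound {s t u v w t' u' v' w' : ℝ} (hs0 : 0 ≤ s) (hs : 2 ≤ s ^ 2)
    (ht : 0 ≤ t) (hu : 0 ≤ u) (hv : 0 ≤ v) (ht' : 0 ≤ t') (hu' : 0 ≤ u') (hv' : 0 ≤ v')
    (hw' : 0 ≤ w')
    (hones : t + u + v + w ≤ t' + u' + v' + w')
    (hcard : (t + t') * (w + w') = (u + u') * (v + v')) :
    2 * (t + u + v + w) ≤ (1 + s) * ((t + v + u' + w') + (t + u + v' + w')) := by
  have hs1 : 1 ≤ s := by nlinarith
  have hamgm : 4 * (t + t') * w ≤ (u + v + (u' + v')) ^ 2 := by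
    nlinarith [sq_nonneg (u + u' - v - v'), mul_nonneg (add_nonneg ht ht') hw']
  set F := u + v
  set E := u' + v'
  have hE : 0 ≤ E := by positivity
  have hF : 0 ≤ F := by positivity
  -- the goal is `2 * w ≤ G`, once `2 * (t + u + v)` is cancelled
  set G := 2 * s * t + (s - 1) * F + (s + 1) * E + (2 * s + 2) * w'
  set H := (2 * s + 4) * t + (s + 1) * F + (s - 1) * E + 2 * s * w'
  have hG : (s - 1) * F + (s + 1) * E ≤ G := by nlinarith
  have hH : (s + 1) * F + (s - 1) * E ≤ H := by nlinarith
  -- `s ^ 2 ≥ 2` enters only here, as `(s - 1) * (s + 1) ≥ 1`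
  have hGH : (F + E) ^ 2 ≤ G * H :=
    calc (F + E) ^ 2 ≤ ((s - 1) * F + (s + 1) * E) * ((s + 1) * F + (s - 1) * E) := by
          nlinarith [mul_nonneg hE hF]
      _ ≤ G * H := mul_le_mul hG hH (by positivity) (by nlinarith)
  have hsub : 2 * w - G ≤ 2 * (t + t') - H := by linarith
  have hmul : 2 * w * (2 * (t + t')) ≤ G * H := by linarith
  have hw : 2 * w ≤ G :=
    le_of_sub_le_sub_of_mul_le_mul (by nlinarith) (by nlinarith) hsub hmul
  linarith

section Ones

variable {ι κ : Type*} (X : ι → κ → Bool)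

def ones (R : Finset ι) (C : Finset κ) : ℕ :=
  ∑ i ∈ R, ∑ j ∈ C, if X i j then 1 else 0

theorem ones_add_ones_compl (R : Finset ι) (C : Finset κ) :
    ones X R C + ones Xᶜ R C = #R * #C := by
  have hcell : ∀ i j, (if X i j then 1 else 0) + (if Xᶜ i j then 1 else 0) = 1 := fun i j => by
    cases h : X i j <;> simp [h]
  simp only [ones, ← sum_add_distrib, hcell]
  simp

theorem sum_ones_singleton_left (R : Finset ι) (C : Finset κ) :
    ∑ i ∈ R, ones X {i} C = ones X R C := by
  simp [ones]

theorem sum_ones_singleton_right (R : Finset ι) (C : Finset κ) :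
    ∑ j ∈ C, ones X R {j} = ones X R C := by
  simp only [ones, sum_singleton]
  exact sum_comm

theorem ones_filter_add_ones_filter_not_left (R : Finset ι) (C : Finset κ) (p : ι → Prop)
    [DecidablePred p] : ones X {i ∈ R | p i} C + ones X {i ∈ R | ¬p i} C = ones X R C :=
  sum_filter_add_sum_filter_not _ _ _

theorem ones_filter_add_ones_filter_not_right (R : Finset ι) (C : Finset κ) (q : κ → Prop)
    [DecidablePred q] : ones X R {j ∈ C | q j} + ones X R {j ∈ C | ¬q j} = ones X R C := by
  simp only [ones, ← sum_add_distrib, sum_filter_add_sum_filter_not]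

end Ones

section V1

variable {N M : ℕ} (X : Fin N → Fin M → Bool)

theorem V1_eq_min_ones (R : Finset (Fin N)) (C : Finset (Fin M)) :
    V1 X R C = min (ones X R C) (ones Xᶜ R C) := by
  have hones : #{p ∈ R ×ˢ C | X p.1 p.2} = ones X R C := by
    rw [card_filter, sum_product]; rfl
  have := ones_add_ones_compl X R C
  rw [V1, hones]
  omega

theorem V1_compl (R : Finset (Fin N)) (C : Finset (Fin M)) : V1 Xᶜ R C = V1 X R C := by
  rw [V1_eq_min_ones, V1_eq_min_ones, compl_compl, min_comm]

theorem sum_V1_singleton_left (R : Finset (Fin N)) (C : Finset (Fin M)) :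
    ∑ i ∈ R, V1 X {i} C =
      ones X {i ∈ R | ones X {i} C ≤ ones Xᶜ {i} C} C +
        ones Xᶜ {i ∈ R | ¬ones X {i} C ≤ ones Xᶜ {i} C} C := by
  simp only [V1_eq_min_ones, min_def, sum_ite, sum_ones_singleton_left]

theorem sum_V1_singleton_right (R : Finset (Fin N)) (C : Finset (Fin M)) :
    ∑ j ∈ C, V1 X R {j} =
      ones X R {j ∈ C | ones X R {j} ≤ ones Xᶜ R {j}} +
        ones Xᶜ R {j ∈ C | ¬ones X R {j} ≤ ones Xᶜ R {j}} := by
  simp only [V1_eq_min_ones, min_def, sum_ite, sum_ones_singleton_right]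

theorem sum_V1_singleton_left_le (R : Finset (Fin N)) (C : Finset (Fin M)) :
    ∑ i ∈ R, V1 X {i} C ≤ V1 X R C := by
  simp only [V1_eq_min_ones]
  rw [← sum_ones_singleton_left X R C, ← sum_ones_singleton_left Xᶜ R C]
  exact le_min (sum_le_sum fun _ _ => min_le_left _ _) (sum_le_sum fun _ _ => min_le_right _ _)

theorem sum_V1_singleton_right_le (R : Finset (Fin N)) (C : Finset (Fin M)) :
    ∑ j ∈ C, V1 X R {j} ≤ V1 X R C := by
  simp only [V1_eq_min_ones]
  rw [← sum_ones_singleton_right X R C, ← sum_ones_singleton_right Xᶜ R C]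
  exact le_min (sum_le_sum fun _ _ => min_le_left _ _) (sum_le_sum fun _ _ => min_le_right _ _)

theorem two_mul_V1_le_of_ones_le_ones_compl {R : Finset (Fin N)} {C : Finset (Fin M)}
    (hle : ones X R C ≤ ones Xᶜ R C) :
    2 * (V1 X R C : ℝ) ≤
      (1 + √2) * ((∑ i ∈ R, V1 X {i} C : ℕ) + (∑ j ∈ C, V1 X R {j} : ℕ)) := by
  set P := {i ∈ R | ones X {i} C ≤ ones Xᶜ {i} C}
  set Q := {i ∈ R | ¬ones X {i} C ≤ ones Xᶜ {i} C}
  set A := {j ∈ C | ones X R {j} ≤ ones Xᶜ R {j}}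
  set B := {j ∈ C | ¬ones X R {j} ≤ ones Xᶜ R {j}}
  have hrows (Y : Fin N → Fin M → Bool) (C' : Finset (Fin M)) :
      ones Y R C' = ones Y P C' + ones Y Q C' :=
    (ones_filter_add_ones_filter_not_left Y R C' _).symm
  have hcols (Y : Fin N → Fin M → Bool) (R' : Finset (Fin N)) :
      ones Y R' C = ones Y R' A + ones Y R' B :=
    (ones_filter_add_ones_filter_not_right Y R' C _).symm
  have hcard : (ones X P A + ones Xᶜ P A) * (ones X Q B + ones Xᶜ Q B) =
      (ones X Q A + ones Xᶜ Q A) * (ones X P B + ones Xᶜ P B) := by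
    simp only [ones_add_ones_compl]
    ring
  rw [V1_eq_min_ones, min_eq_left hle, sum_V1_singleton_left, sum_V1_singleton_right,
    hcols X P, hcols Xᶜ Q, hrows X A, hrows Xᶜ B, hrows X C, hcols X P, hcols X Q]
  rw [hrows X C, hrows Xᶜ C, hcols X P, hcols X Q, hcols Xᶜ P, hcols Xᶜ Q] at hle
  have key := quadrant_bound (s := √2) (w := (ones X Q B : ℝ)) (w' := ones Xᶜ Q B)
    (t := ones X P A) (t' := ones Xᶜ P A) (u := ones X Q A) (u' := ones Xᶜ Q A)
    (v := ones X P B) (v' := ones Xᶜ P B) (by positivity) (by simp)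
    (by positivity) (by positivity) (by positivity) (by positivity) (by positivity)
    (by positivity) (by positivity) (by exact_mod_cast (by omega : _ ≤ _)) (by exact_mod_cast hcard)
  push_cast
  linarith

theorem two_mul_V1_le (R : Finset (Fin N)) (C : Finset (Fin M)) :
    2 * (V1 X R C : ℝ) ≤
      (1 + √2) * ((∑ i ∈ R, V1 X {i} C : ℕ) + (∑ j ∈ C, V1 X R {j} : ℕ)) := by
  rcases le_total (ones X R C) (ones Xᶜ R C) with hle | hle
  · exact two_mul_V1_le_of_ones_le_ones_compl X hle
  · have hle' : ones Xᶜ R C ≤ ones Xᶜᶜ R C := by rwa [compl_compl]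
    simpa only [V1_compl] using two_mul_V1_le_of_ones_le_ones_compl Xᶜ hle'

end V1

section Clustering

variable {N M : ℕ} {κr κc : Type*} [Fintype κr] [DecidableEq κr] [Fintype κc] [DecidableEq κc]
  (X : Fin N → Fin M → Bool)

def rowClusteringCost (ρ : Fin N → κr) : ℕ :=
  ∑ k, ∑ j : Fin M, V1 X {i | ρ i = k} {j}

def colClusteringCost (γ : Fin M → κc) : ℕ :=
  ∑ i : Fin N, ∑ l, V1 X {i} {j | γ j = l}

def biclusteringCost (ρ : Fin N → κr) (γ : Fin M → κc) : ℕ :=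
  ∑ k, ∑ l, V1 X {i | ρ i = k} {j | γ j = l}

theorem sum_sum_sum_V1_singleton_right (ρ : Fin N → κr) (γ : Fin M → κc) :
    ∑ k, ∑ l, ∑ j ∈ {j | γ j = l}, V1 X {i | ρ i = k} {j} = rowClusteringCost X ρ :=
  sum_congr rfl fun _ _ => sum_fiberwise _ _ _

theorem sum_sum_sum_V1_singleton_left (ρ : Fin N → κr) (γ : Fin M → κc) :
    ∑ k, ∑ l, ∑ i ∈ {i | ρ i = k}, V1 X {i} {j | γ j = l} = colClusteringCost X γ :=
  calc _ = ∑ l, ∑ k, ∑ i ∈ {i | ρ i = k}, V1 X {i} {j | γ j = l} := sum_comm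
    _ = ∑ l, ∑ i, V1 X {i} {j | γ j = l} := sum_congr rfl fun _ _ => sum_fiberwise _ _ _
    _ = colClusteringCost X γ := sum_comm

theorem rowClusteringCost_le_biclusteringCost (ρ : Fin N → κr) (γ : Fin M → κc) :
    rowClusteringCost X ρ ≤ biclusteringCost X ρ γ := by
  rw [← sum_sum_sum_V1_singleton_right X ρ γ]
  exact sum_le_sum fun _ _ => sum_le_sum fun _ _ => sum_V1_singleton_right_le X _ _

theorem colClusteringCost_le_biclusteringCost (ρ : Fin N → κr) (γ : Fin M → κc) :
    colClusteringCost X γ ≤ biclusteringCost X ρ γ := by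
  rw [← sum_sum_sum_V1_singleton_left X ρ γ]
  exact sum_le_sum fun _ _ => sum_le_sum fun _ _ => sum_V1_singleton_left_le X _ _

theorem two_mul_biclusteringCost_le (ρ : Fin N → κr) (γ : Fin M → κc) :
    2 * (biclusteringCost X ρ γ : ℝ) ≤
      (1 + √2) * (rowClusteringCost X ρ + colClusteringCost X γ) := by
  rw [← sum_sum_sum_V1_singleton_right X ρ γ, ← sum_sum_sum_V1_singleton_left X ρ γ,
    biclusteringCost]
  push_cast
  simp only [mul_sum, ← sum_add_distrib]
  exact sum_le_sum fun k _ => sum_le_sum fun l _ => by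
    simpa only [Nat.cast_sum, add_comm] using two_mul_V1_le X {i | ρ i = k} {j | γ j = l}

end Clustering

open Finset in
/-- Biclustering of 0-1 matrices with L1 cost admits a (1+√2)-approximation by
independent optimal one-way row and column clusterings. -/
theorem l1_biclustering_approx (N M Kr Kc : ℕ) (X : Fin N → Fin M → Bool)
    (ρ : Fin N → Fin Kr) (γ : Fin M → Fin Kc)
    (hρ : ∀ ρ' : Fin N → Fin Kr,
      ∑ k, ∑ j : Fin M, V1 X (Finset.univ.filter (fun i => ρ i = k)) {j} ≤
        ∑ k, ∑ j : Fin M, V1 X (Finset.univ.filter (fun i => ρ' i = k)) {j})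
    (hγ : ∀ γ' : Fin M → Fin Kc,
      ∑ i : Fin N, ∑ l, V1 X {i} (Finset.univ.filter (fun j => γ j = l)) ≤
        ∑ i : Fin N, ∑ l, V1 X {i} (Finset.univ.filter (fun j => γ' j = l)))
    (ρs : Fin N → Fin Kr) (γs : Fin M → Fin Kc) :
    ((∑ k, ∑ l,
        V1 X (Finset.univ.filter (fun i => ρ i = k))
          (Finset.univ.filter (fun j => γ j = l)) : ℕ) : ℝ) ≤
      (1 + Real.sqrt 2) * ((∑ k, ∑ l,
        V1 X (Finset.univ.filter (fun i => ρs i = k))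
          (Finset.univ.filter (fun j => γs j = l)) : ℕ) : ℝ) := by
  change (biclusteringCost X ρ γ : ℝ) ≤ (1 + √2) * biclusteringCost X ρs γs
  have hrow : (rowClusteringCost X ρ : ℝ) ≤ biclusteringCost X ρs γs := by
    exact_mod_cast (hρ ρs).trans (rowClusteringCost_le_biclusteringCost X ρs γs)
  have hcol : (colClusteringCost X γ : ℝ) ≤ biclusteringCost X ρs γs := by
    exact_mod_cast (hγ γs).trans (colClusteringCost_le_biclusteringCost X ρs γs)
  have hsum := mul_le_mul_of_nonneg_left (add_le_add hrow hcol) (by positivity : (0 : ℝ) ≤ 1 + √2)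
  linarith [two_mul_biclusteringCost_le X ρ γ]
end
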